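/- Let ψ(z) = log(1 + Σ_{j=1}^{k-1} exp(−z_j)). If A ∈ ℝ^{(k-1)×(k-1)} satisfies ψ(z) = ψ(A z) for all z ∈ ℝ^{k-1}, then A is a permutation matrix. -/

import Mathlib

open Matrix

/-- The template of the multinomial cross entropy on `ℝ^{k-1}` (here `k-1 = n`):
`ψ(z) = log(1 + Σ_j exp(−z_j))`. -/
noncomputable def crossEntropyTemplate (n : ℕ) (z : Fin n → ℝ) : ℝ :=
  Real.log (1 + ∑ j, Real.exp (-z j))

lemma deriv_step {m : ℕ} (a c : Fin m → ℝ) (d : ℝ)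
    (h : ∀ t, ∑ i, c i * Real.exp (a i * t) = Real.exp t + d) (t : ℝ) :
    ∑ i, c i * a i * Real.exp (a i * t) = Real.exp t := by
  have hf : HasDerivAt (fun s => ∑ i, c i * Real.exp (a i * s))
      (∑ i, c i * a i * Real.exp (a i * t)) t := by
    refine HasDerivAt.fun_sum fun i _ => ?_
    have h1 : HasDerivAt (fun s : ℝ => a i * s) (a i) t := by
      simpa using (hasDerivAt_id t).const_mul (a i)
    have h3 := h1.exp.const_mul (c i)
    convert h3 using 1
    · rfl
    ring
  have hg : HasDerivAt (fun s => Real.exp s + d) (Real.exp t) t :=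
    (Real.hasDerivAt_exp t).add_const d
  have hfg : (fun s => ∑ i, c i * Real.exp (a i * s)) = fun s => Real.exp s + d :=
    funext h
  rw [hfg] at hf
  exact hf.unique hg

lemma col_lemma {m : ℕ} (a : Fin m → ℝ) (s1 : ∑ i, a i = 1)
    (s2 : ∑ i, a i * a i = 1) (s4 : ∑ i, a i * a i * a i * a i = 1) :
    ∃ i, a i = 1 ∧ ∀ j, j ≠ i → a j = 0 := by
  classical
  have hb0 : ∀ i, (0:ℝ) ≤ a i * a i := fun i => mul_self_nonneg _
  have hle : ∀ i, a i * a i ≤ 1 := by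
    intro i
    calc a i * a i ≤ ∑ j, a j * a j :=
          Finset.single_le_sum (fun j _ => hb0 j) (Finset.mem_univ i)
      _ = 1 := s2
  have hkey : ∀ i ∈ Finset.univ, a i * a i * (1 - a i * a i) = 0 := by
    have hsum : ∑ i, a i * a i * (1 - a i * a i) = 0 := by
      have heq : ∑ i, a i * a i * (1 - a i * a i)
          = ∑ i, a i * a i - ∑ i, a i * a i * a i * a i := by
        rw [← Finset.sum_sub_distrib]
        exact Finset.sum_congr rfl fun i _ => by ring
      rw [heq, s2, s4]; ring
    refine (Finset.sum_eq_zero_iff_of_nonneg ?_).mp hsum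
    intro i _
    exact mul_nonneg (hb0 i) (by linarith [hle i])
  have h01 : ∀ i, a i * a i = 0 ∨ a i * a i = 1 := by
    intro i
    rcases mul_eq_zero.mp (hkey i (Finset.mem_univ i)) with h | h
    · exact Or.inl h
    · exact Or.inr (by linarith)
  have hex : ∃ i, a i ≠ 0 := by
    by_contra hc
    push_neg at hc
    rw [Finset.sum_eq_zero (fun i _ => hc i)] at s1
    norm_num at s1
  obtain ⟨i, hi⟩ := hex
  have hbi : a i * a i = 1 := (h01 i).resolve_left (mul_ne_zero hi hi)
  have hj0 : ∀ j, j ≠ i → a j = 0 := by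
    intro j hj
    by_contra hja
    have hbj : a j * a j = 1 := (h01 j).resolve_left (mul_ne_zero hja hja)
    have h2le : a i * a i + a j * a j ≤ ∑ l, a l * a l := by
      have hsub : ({i, j} : Finset (Fin m)) ⊆ Finset.univ := Finset.subset_univ _
      have := Finset.sum_le_sum_of_subset_of_nonneg hsub (fun l _ _ => hb0 l)
      rwa [Finset.sum_pair (Ne.symm hj)] at this
    rw [s2, hbi, hbj] at h2le
    linarith
  have hai : a i = 1 := by
    have hs : ∑ j, a j = a i :=
      Finset.sum_eq_single i (fun j _ hj => hj0 j hj)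
        (fun hmem => absurd (Finset.mem_univ i) hmem)
    rw [hs] at s1
    exact s1
  exact ⟨i, hai, hj0⟩

/-- If `A ∈ ℝ^{(k-1)×(k-1)}` satisfies `ψ(z) = ψ(A z)` for all `z`, where `ψ` is the
cross-entropy template, then `A` is a permutation matrix. -/
theorem cross_entropy_template_rigidity (n : ℕ) (A : Matrix (Fin n) (Fin n) ℝ)
    (h : ∀ z : Fin n → ℝ,
      crossEntropyTemplate n z = crossEntropyTemplate n (A.mulVec z)) :
    ∃ σ : Equiv.Perm (Fin n),
      A = Matrix.of fun i j => if σ i = j then 1 else 0 := by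
  classical
  -- Step 1: the sums of exponentials agree
  have hsum : ∀ z : Fin n → ℝ,
      ∑ j, Real.exp (-z j) = ∑ i, Real.exp (-(A.mulVec z i)) := by
    intro z
    have h1 : (0:ℝ) < 1 + ∑ j, Real.exp (-z j) := by positivity
    have h2 : (0:ℝ) < 1 + ∑ i, Real.exp (-(A.mulVec z i)) := by positivity
    have hz := h z
    unfold crossEntropyTemplate at hz
    have := congrArg Real.exp hz
    rw [Real.exp_log h1, Real.exp_log h2] at this
    linarith
  -- Step 2: column identity
  have hcolid : ∀ (m : Fin n) (t : ℝ),
      ∑ i, Real.exp (A i m * t) = Real.exp t + ((n:ℝ) - 1) := by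
    intro m t
    have hz := hsum (fun j => if j = m then -t else 0)
    have hL : ∑ j, Real.exp (-(if j = m then -t else (0:ℝ)))
        = (n:ℝ) + (Real.exp t - 1) := by
      have hpt : ∀ j, Real.exp (-(if j = m then -t else (0:ℝ)))
          = 1 + (if j = m then Real.exp t - 1 else 0) := by
        intro j; split_ifs <;> simp
      rw [Finset.sum_congr rfl fun j _ => hpt j, Finset.sum_add_distrib,
        Finset.sum_const, Finset.sum_ite_eq']
      simp
    have hR : ∀ i, A.mulVec (fun j => if j = m then -t else 0) i = -(A i m * t) := by
      intro i
      simp [Matrix.mulVec, dotProduct, mul_ite, mul_zero, Finset.sum_ite_eq']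
    have hR' : ∑ i, Real.exp (-(A.mulVec (fun j => if j = m then -t else 0) i))
        = ∑ i, Real.exp (A i m * t) := by
      refine Finset.sum_congr rfl fun i _ => ?_
      rw [hR i, neg_neg]
    rw [hL, hR'] at hz
    linarith
  -- Step 3: power sums for each column
  have hcol : ∀ m : Fin n, ∃ i, A i m = 1 ∧ ∀ j, j ≠ i → A j m = 0 := by
    intro m
    set a : Fin n → ℝ := fun i => A i m with ha
    have h0 : ∀ t, ∑ i, (1:ℝ) * Real.exp (a i * t) = Real.exp t + ((n:ℝ) - 1) := by
      intro t; simpa using hcolid m t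
    have p1 := deriv_step a (fun _ => (1:ℝ)) _ h0
    have q1 : ∀ t, ∑ i, a i * Real.exp (a i * t) = Real.exp t + 0 := by
      intro t; simpa using p1 t
    have p2 := deriv_step a a 0 q1
    have q2 : ∀ t, ∑ i, (a i * a i) * Real.exp (a i * t) = Real.exp t + 0 := by
      intro t; simpa using p2 t
    have p3 := deriv_step a (fun i => a i * a i) 0 q2
    have q3 : ∀ t, ∑ i, (a i * a i * a i) * Real.exp (a i * t) = Real.exp t + 0 := by
      intro t; simpa using p3 t
    have p4 := deriv_step a (fun i => a i * a i * a i) 0 q3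
    have s1 : ∑ i, a i = 1 := by have := q1 0; simpa using this
    have s2 : ∑ i, a i * a i = 1 := by have := q2 0; simpa using this
    have s4 : ∑ i, a i * a i * a i * a i = 1 := by have := p4 0; simpa using this
    exact col_lemma a s1 s2 s4
  choose τ hτ1 hτ0 using hcol
  -- Step 4: τ is injective
  have hinj : Function.Injective τ := by
    intro m1 m2 hm
    by_contra hne
    set z : Fin n → ℝ := fun j => if j = m1 then -1 else if j = m2 then -1 else 0 with hzdef
    have hA1 : ∀ i, A i m1 = if i = τ m1 then 1 else 0 := by
      intro i; split_ifs with hc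
      · rw [hc]; exact hτ1 m1
      · exact hτ0 m1 i hc
    have hA2 : ∀ i, A i m2 = if i = τ m1 then 1 else 0 := by
      intro i; split_ifs with hc
      · rw [hc, hm]; exact hτ1 m2
      · exact hτ0 m2 i (by rw [← hm]; exact hc)
    have hL : ∑ j, Real.exp (-z j) = (n:ℝ) + (2 * Real.exp 1 - 2) := by
      have hpt : ∀ j, Real.exp (-z j)
          = 1 + ((if j = m1 then Real.exp 1 - 1 else 0)
              + (if j = m2 then Real.exp 1 - 1 else 0)) := by
        intro j
        rcases eq_or_ne j m1 with h1 | h1 <;> rcases eq_or_ne j m2 with h2 | h2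
        · exact absurd (h1.symm.trans h2) hne
        · simp only [hzdef, h1, h2, if_pos, if_neg, hne, Ne.symm (hne : m1 ≠ m2),
            ite_true, ite_false, if_true, if_false, eq_self_iff_true, not_false_iff]
          norm_num
        · simp only [hzdef, h1, h2, if_pos, if_neg, hne, Ne.symm (hne : m1 ≠ m2),
            ite_true, ite_false, if_true, if_false, eq_self_iff_true, not_false_iff]
          norm_num
        · simp only [hzdef, h1, h2, ite_false, if_false]
          norm_num
      rw [Finset.sum_congr rfl fun j _ => hpt j, Finset.sum_add_distrib,
        Finset.sum_add_distrib, Finset.sum_const, Finset.sum_ite_eq', Finset.sum_ite_eq']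
      simp
      ring
    have hmv : ∀ i, A.mulVec z i = if i = τ m1 then -2 else 0 := by
      intro i
      have hpt : ∀ j, A i j * z j
          = (if j = m1 then -(A i m1) else 0) + (if j = m2 then -(A i m2) else 0) := by
        intro j
        rcases eq_or_ne j m1 with h1 | h1 <;> rcases eq_or_ne j m2 with h2 | h2
        · exact absurd (h1.symm.trans h2) hne
        · simp only [hzdef, h1, h2, if_pos, if_neg, hne, Ne.symm (hne : m1 ≠ m2),
            ite_true, ite_false, if_true, if_false, eq_self_iff_true, not_false_iff]
          norm_num
        · simp only [hzdef, h1, h2, if_pos, if_neg, hne, Ne.symm (hne : m1 ≠ m2),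
            ite_true, ite_false, if_true, if_false, eq_self_iff_true, not_false_iff]
          norm_num
        · simp only [hzdef, h1, h2, ite_false, if_false]
          norm_num
      have : A.mulVec z i = ∑ j, A i j * z j := rfl
      rw [this, Finset.sum_congr rfl fun j _ => hpt j, Finset.sum_add_distrib,
        Finset.sum_ite_eq', Finset.sum_ite_eq']
      simp [hA1 i, hA2 i]
      split_ifs <;> ring
    have hR : ∑ i, Real.exp (-(A.mulVec z i)) = (n:ℝ) + (Real.exp 2 - 1) := by
      have hpt : ∀ i, Real.exp (-(A.mulVec z i))
          = 1 + (if i = τ m1 then Real.exp 2 - 1 else 0) := by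
        intro i
        rw [hmv i]
        split_ifs <;> norm_num
      rw [Finset.sum_congr rfl fun i _ => hpt i, Finset.sum_add_distrib,
        Finset.sum_const, Finset.sum_ite_eq']
      simp
    have hzz := hsum z
    rw [hL, hR] at hzz
    have he2 : Real.exp 2 = Real.exp 1 * Real.exp 1 := by
      rw [← Real.exp_add]; norm_num
    nlinarith [Real.exp_one_gt_d9]
  have hbij : Function.Bijective τ := Finite.injective_iff_bijective.mp hinj
  let e : Equiv.Perm (Fin n) := Equiv.ofBijective τ hbij
  refine ⟨e.symm, ?_⟩
  ext i j
  show A i j = if e.symm i = j then 1 else 0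
  have hiff : e.symm i = j ↔ i = τ j := by
    have hej : e j = τ j := rfl
    rw [Equiv.symm_apply_eq, hej]
  by_cases hc : i = τ j
  · rw [if_pos (hiff.mpr hc), hc]; exact hτ1 j
  · rw [if_neg (fun hh => hc (hiff.mp hh))]; exact hτ0 j i hc
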